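/- arXiv:2502.05623 — 2 statements merged into one kernel-verified Lean document; each statement's English description precedes it below -/
import Mathlib

section
/- Let f : ℝᵈ → ℝ be twice continuously differentiable and α-strongly convex. Let η > 0 and let the proximal point iterates be defined by x_{k+1} = argmin_x { f(x) + ‖x - x_k‖²/(2η) }, equivalently x_{k+1} = x_k - η∇f(x_{k+1}). Then for all k ≥ 0, ‖∇f(x_k)‖² ≤ ‖∇f(x_0)‖² / (1 + αη)^{2k}. -/
open Real

/-
Strong convexity of `f` makes `∇f` strongly monotone: integrating the Hessian bound along the
segment from `b` to `a` gives `α ‖a - b‖² ≤ ⟪∇f a - ∇f b, a - b⟫`. A proximal step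
`x' = x - η ∇f x'` has `x - x' = η ∇f x'`, so strong monotonicity reads
`(1 + αη) ‖∇f x'‖² ≤ ⟪∇f x, ∇f x'⟫ ≤ ‖∇f x‖ ‖∇f x'‖` by Cauchy–Schwarz. Hence each step shrinks
the gradient norm by the factor `1 + αη`, and squaring gives the claim.
-/

section InnerProductSpace

variable {E : Type*} [NormedAddCommGroup E] [InnerProductSpace ℝ E]

def StronglyMonotone (α : ℝ) (G : E → E) : Prop :=
  ∀ a b, α * ‖a - b‖ ^ 2 ≤ inner ℝ (G a - G b) (a - b)

theorem stronglyMonotone_of_le_inner_fderiv {α : ℝ} {G : E → E} (hG : Differentiable ℝ G)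
    (h : ∀ x v, α * ‖v‖ ^ 2 ≤ inner ℝ (fderiv ℝ G x v) v) : StronglyMonotone α G := by
  intro a b
  set v := a - b
  have hderiv : ∀ t : ℝ, HasDerivAt (fun t : ℝ => inner ℝ (G (b + t • v)) v)
      (inner ℝ (fderiv ℝ G (b + t • v) v) v) t := by
    intro t
    have hline : HasDerivAt (fun t : ℝ => b + t • v) v t := by
      simpa using ((hasDerivAt_id t).smul_const v).const_add b
    simpa using ((hG _).hasFDerivAt.comp_hasDerivAt t hline).inner ℝ (hasDerivAt_const t v)
  have := mul_sub_le_image_sub_of_le_deriv (fun t => (hderiv t).differentiableAt)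
    (fun t => (hderiv t).deriv ▸ h _ v) zero_le_one
  simpa [v, inner_sub_left] using this

theorem mul_norm_le_of_mul_norm_sq_le_inner {c : ℝ} {u w : E}
    (h : c * ‖u‖ ^ 2 ≤ inner ℝ w u) : c * ‖u‖ ≤ ‖w‖ := by
  rcases (norm_nonneg u).eq_or_lt with hu | hu
  · simp [← hu]
  · refine le_of_mul_le_mul_right ?_ hu
    nlinarith [real_inner_le_norm w u]

namespace StronglyMonotone

variable {α η : ℝ} {G : E → E}

theorem mul_norm_le_of_resolvent (hG : StronglyMonotone α G) (hη : 0 < η) {x x' : E}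
    (hx' : x' = x - η • G x') : (1 + α * η) * ‖G x'‖ ≤ ‖G x‖ := by
  have hstep : x - x' = η • G x' := by nth_rw 1 [hx']; abel
  have hmono := hG x x'
  rw [hstep, norm_smul, real_inner_smul_right, inner_sub_left, real_inner_self_eq_norm_sq,
    norm_of_nonneg hη.le] at hmono
  refine mul_norm_le_of_mul_norm_sq_le_inner ?_
  nlinarith

theorem pow_mul_norm_le_of_proximal (hG : StronglyMonotone α G) (hα : 0 ≤ α) (hη : 0 < η)
    {x : ℕ → E} (hx : ∀ k, x (k + 1) = x k - η • G (x (k + 1))) (k : ℕ) :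
    (1 + α * η) ^ k * ‖G (x k)‖ ≤ ‖G (x 0)‖ := by
  induction k with
  | zero => simp
  | succ k ih =>
    calc (1 + α * η) ^ (k + 1) * ‖G (x (k + 1))‖
        = (1 + α * η) ^ k * ((1 + α * η) * ‖G (x (k + 1))‖) := by ring
      _ ≤ (1 + α * η) ^ k * ‖G (x k)‖ := by
        gcongr
        exact hG.mul_norm_le_of_resolvent hη (hx k)
      _ ≤ ‖G (x 0)‖ := ih

end StronglyMonotone

end InnerProductSpace

theorem ContDiff.differentiable_gradient {F : Type*} [NormedAddCommGroup F]
    [InnerProductSpace ℝ F] [CompleteSpace F] {f : F → ℝ} (hf : ContDiff ℝ 2 f) :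
    Differentiable ℝ (gradient f) :=
  (InnerProductSpace.toDual ℝ F).symm.differentiable.comp
    ((hf.fderiv_right (by norm_num)).differentiable one_ne_zero)

/-- Proximal point method on an `α`-strongly convex `C²` function: the squared
gradient norm contracts as `‖∇f(x_k)‖² ≤ ‖∇f(x_0)‖² / (1+αη)^{2k}`. -/
theorem proximal_point_sq_grad_norm_decay
    (d : ℕ) (f : EuclideanSpace ℝ (Fin d) → ℝ) (α η : ℝ) (hα : 0 < α) (hη : 0 < η)
    (hf : ContDiff ℝ 2 f)
    (hconv : ∀ x v : EuclideanSpace ℝ (Fin d),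
      α * ‖v‖ ^ 2 ≤ (inner ℝ (fderiv ℝ (gradient f) x v) v : ℝ))
    (x : ℕ → EuclideanSpace ℝ (Fin d))
    (hiter : ∀ k : ℕ, x (k + 1) = x k - η • gradient f (x (k + 1))) :
    ∀ k : ℕ, ‖gradient f (x k)‖ ^ 2 ≤ ‖gradient f (x 0)‖ ^ 2 / (1 + α * η) ^ (2 * k) := by
  intro k
  have hmono := stronglyMonotone_of_le_inner_fderiv hf.differentiable_gradient hconv
  have hdecay := hmono.pow_mul_norm_le_of_proximal hα.le hη hiter k
  rw [le_div_iff₀ (by positivity), pow_mul', ← mul_pow, mul_comm]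
  exact pow_le_pow_left₀ (by positivity) hdecay 2
end

section
/- Under the setting of the Gaussian Proximal Sampler (target ν = N(0,α⁻¹I), iterates ρ_k = N(m_k, σ_k²I) with m_k = m_0/(1+αη)^k and σ_k² = (σ_0²-1/α)/(1+αη)^{2k} + 1/α), the relative Fisher information satisfies FI(ρ_k ‖ ν) = α²‖m_0‖²/(1+αη)^{2k} + (d/σ_k²)(1-ασ_0²)²/(1+αη)^{4k}. In particular, if m_0 ≠ 0 then FI(ρ_k‖ν) = O((1+αη)^{-2k}). -/
open Real MeasureTheory

/-- Density of the isotropic Gaussian `N(m, σ²·I)` on `ℝᵈ` (variance `s`). -/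
noncomputable def gaussDensity (d : ℕ) (m : EuclideanSpace ℝ (Fin d)) (s : ℝ)
    (x : EuclideanSpace ℝ (Fin d)) : ℝ :=
  (2 * Real.pi * s) ^ (-(d : ℝ) / 2) * Real.exp (-‖x - m‖ ^ 2 / (2 * s))

section Aux
open Filter Topology

section OneD

variable {b : ℝ}

lemma myAtTop_le_cocompact : (atTop : Filter ℝ) ≤ cocompact ℝ := by
  rw [cocompact_eq_atBot_atTop]; exact le_sup_right

lemma myAtBot_le_cocompact : (atBot : Filter ℝ) ≤ cocompact ℝ := by
  rw [cocompact_eq_atBot_atTop]; exact le_sup_left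

lemma my_exp_cocompact (hb : 0 < b) :
    Tendsto (fun x : ℝ => exp (-b * x ^ 2)) (cocompact ℝ) (𝓝 0) := by
  simpa using tendsto_rpow_abs_mul_exp_neg_mul_sq_cocompact hb 0

lemma my_absxexp_cocompact (hb : 0 < b) :
    Tendsto (fun x : ℝ => |x| * exp (-b * x ^ 2)) (cocompact ℝ) (𝓝 0) := by
  simpa using tendsto_rpow_abs_mul_exp_neg_mul_sq_cocompact hb 1

lemma my_xexp_atTop (hb : 0 < b) :
    Tendsto (fun x : ℝ => x * exp (-b * x ^ 2)) atTop (𝓝 0) := by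
  apply ((my_absxexp_cocompact hb).mono_left myAtTop_le_cocompact).congr'
  filter_upwards [eventually_ge_atTop (0:ℝ)] with x hx
  rw [abs_of_nonneg hx]

lemma my_xexp_atBot (hb : 0 < b) :
    Tendsto (fun x : ℝ => x * exp (-b * x ^ 2)) atBot (𝓝 0) := by
  have h := ((my_absxexp_cocompact hb).mono_left myAtBot_le_cocompact).neg
  rw [neg_zero] at h
  apply h.congr'
  filter_upwards [eventually_le_atBot (0:ℝ)] with x hx
  rw [abs_of_nonpos hx]; ring

lemma my_integral_x_mul_exp (hb : 0 < b) : ∫ x : ℝ, x * exp (-b * x ^ 2) = 0 := by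
  set F : ℝ → ℝ := fun x => -(2 * b)⁻¹ * exp (-b * x ^ 2) with hF_def
  have hF : ∀ x, HasDerivAt F (x * exp (-b * x ^ 2)) x := by
    intro x
    have h1 : HasDerivAt (fun x : ℝ => -b * x ^ 2) (-b * (2 * x)) x := by
      simpa using (hasDerivAt_pow 2 x).const_mul (-b)
    have h2 := (h1.exp).const_mul (-(2 * b)⁻¹)
    refine h2.congr_deriv ?_
    field_simp
  have hFtop : Tendsto F atTop (𝓝 0) := by
    have h := ((my_exp_cocompact hb).mono_left myAtTop_le_cocompact).const_mul (-(2 * b)⁻¹)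
    rw [mul_zero] at h
    exact h
  have hFbot : Tendsto F atBot (𝓝 0) := by
    have h := ((my_exp_cocompact hb).mono_left myAtBot_le_cocompact).const_mul (-(2 * b)⁻¹)
    rw [mul_zero] at h
    exact h
  have hint := integrable_mul_exp_neg_mul_sq hb
  have hIoi : ∫ x in Set.Ioi (0:ℝ), x * exp (-b * x ^ 2) = 0 - F 0 :=
    integral_Ioi_of_hasDerivAt_of_tendsto' (fun x _ => hF x) hint.integrableOn hFtop
  have hIic : ∫ x in Set.Iic (0:ℝ), x * exp (-b * x ^ 2) = F 0 - 0 :=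
    integral_Iic_of_hasDerivAt_of_tendsto' (fun x _ => hF x) hint.integrableOn hFbot
  rw [← intervalIntegral.integral_Iic_add_Ioi hint.integrableOn hint.integrableOn, hIoi, hIic]
  ring

lemma my_integrable_sq_mul_exp (hb : 0 < b) :
    Integrable (fun x : ℝ => x ^ 2 * exp (-b * x ^ 2)) := by
  have h := integrable_rpow_mul_exp_neg_mul_sq hb (s := 2) (by norm_num)
  have he : ∀ x : ℝ, x ^ (2:ℝ) = x ^ 2 := fun x => by
    rw [show (2:ℝ) = ((2:ℕ):ℝ) by norm_num, rpow_natCast]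
  simpa [he] using h

lemma my_integral_sq_mul_exp (hb : 0 < b) :
    ∫ x : ℝ, x ^ 2 * exp (-b * x ^ 2) = √(π / b) / (2 * b) := by
  set G : ℝ → ℝ := fun x => x * exp (-b * x ^ 2) with hG_def
  set g : ℝ → ℝ := fun x => exp (-b * x ^ 2) - 2 * b * (x ^ 2 * exp (-b * x ^ 2)) with hg_def
  have hG : ∀ x, HasDerivAt G (g x) x := by
    intro x
    have h1 : HasDerivAt (fun x : ℝ => -b * x ^ 2) (-b * (2 * x)) x := by
      simpa using (hasDerivAt_pow 2 x).const_mul (-b)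
    have h2 := (hasDerivAt_id x).mul h1.exp
    refine h2.congr_deriv ?_
    simp [hg_def]
    ring
  have hgint : Integrable g :=
    (integrable_exp_neg_mul_sq hb).sub ((my_integrable_sq_mul_exp hb).const_mul (2 * b))
  have hIoi : ∫ x in Set.Ioi (0:ℝ), g x = 0 - G 0 :=
    integral_Ioi_of_hasDerivAt_of_tendsto' (fun x _ => hG x) hgint.integrableOn
      (my_xexp_atTop hb)
  have hIic : ∫ x in Set.Iic (0:ℝ), g x = G 0 - 0 :=
    integral_Iic_of_hasDerivAt_of_tendsto' (fun x _ => hG x) hgint.integrableOn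
      (my_xexp_atBot hb)
  have htot : ∫ x : ℝ, g x = 0 := by
    rw [← intervalIntegral.integral_Iic_add_Ioi hgint.integrableOn hgint.integrableOn, hIoi, hIic]
    ring
  have hsplit : ∫ x : ℝ, g x
      = (∫ x : ℝ, exp (-b * x ^ 2)) - 2 * b * ∫ x : ℝ, x ^ 2 * exp (-b * x ^ 2) := by
    rw [hg_def]
    rw [integral_sub (integrable_exp_neg_mul_sq hb)
      ((my_integrable_sq_mul_exp hb).const_mul (2 * b)), integral_const_mul]
  rw [htot, integral_gaussian] at hsplit
  have hb' : (2 * b) ≠ 0 := by positivity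
  field_simp at hsplit ⊢
  linarith

end OneD

section Density

noncomputable def g1 (s t : ℝ) : ℝ := (2 * π * s) ^ (-(1:ℝ)/2) * exp (-t ^ 2 / (2 * s))

variable {s : ℝ}

lemma hexp_eq (t : ℝ) : exp (-t ^ 2 / (2 * s)) = exp (-(2 * s)⁻¹ * t ^ 2) := by
  congr 1; ring

lemma sqrt2pis (hs : 0 < s) : √(π / (2 * s)⁻¹) = √(2 * π * s) := by
  congr 1; field_simp

lemma K_mul_sqrt (hs : 0 < s) : (2 * π * s) ^ (-(1:ℝ)/2) * √(2 * π * s) = 1 := by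
  have h : (0:ℝ) < 2 * π * s := by positivity
  rw [sqrt_eq_rpow, ← rpow_add h]
  norm_num

lemma g1_key_eq (a c t : ℝ) :
    g1 s t * (a * t + c) ^ 2
      = ((2 * π * s) ^ (-(1:ℝ)/2) * a ^ 2) * (t ^ 2 * exp (-(2 * s)⁻¹ * t ^ 2))
        + ((2 * π * s) ^ (-(1:ℝ)/2) * (2 * a * c)) * (t * exp (-(2 * s)⁻¹ * t ^ 2))
        + ((2 * π * s) ^ (-(1:ℝ)/2) * c ^ 2) * exp (-(2 * s)⁻¹ * t ^ 2) := by
  rw [g1, hexp_eq]; ring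

lemma g1_key_integrable (hs : 0 < s) (a c : ℝ) :
    Integrable (fun t : ℝ => g1 s t * (a * t + c) ^ 2) := by
  have hb : (0:ℝ) < (2 * s)⁻¹ := by positivity
  have h1 := (my_integrable_sq_mul_exp hb).const_mul ((2 * π * s) ^ (-(1:ℝ)/2) * a ^ 2)
  have h2 := (integrable_mul_exp_neg_mul_sq hb).const_mul ((2 * π * s) ^ (-(1:ℝ)/2) * (2 * a * c))
  have h3 := (integrable_exp_neg_mul_sq hb).const_mul ((2 * π * s) ^ (-(1:ℝ)/2) * c ^ 2)
  refine (((h1.add h2).add h3).congr (Filter.Eventually.of_forall fun t => ?_))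
  exact (g1_key_eq a c t).symm

lemma g1_key_integral (hs : 0 < s) (a c : ℝ) :
    ∫ t : ℝ, g1 s t * (a * t + c) ^ 2 = a ^ 2 * s + c ^ 2 := by
  have hb : (0:ℝ) < (2 * s)⁻¹ := by positivity
  simp_rw [g1_key_eq a c]
  have h1 : Integrable (fun t : ℝ =>
      ((2 * π * s) ^ (-(1:ℝ)/2) * a ^ 2) * (t ^ 2 * exp (-(2 * s)⁻¹ * t ^ 2))) :=
    (my_integrable_sq_mul_exp hb).const_mul _
  have h2 : Integrable (fun t : ℝ =>
      ((2 * π * s) ^ (-(1:ℝ)/2) * (2 * a * c)) * (t * exp (-(2 * s)⁻¹ * t ^ 2))) :=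
    (integrable_mul_exp_neg_mul_sq hb).const_mul _
  have h3 : Integrable (fun t : ℝ =>
      ((2 * π * s) ^ (-(1:ℝ)/2) * c ^ 2) * exp (-(2 * s)⁻¹ * t ^ 2)) :=
    (integrable_exp_neg_mul_sq hb).const_mul _
  have h12 : Integrable (fun t : ℝ =>
      ((2 * π * s) ^ (-(1:ℝ)/2) * a ^ 2) * (t ^ 2 * exp (-(2 * s)⁻¹ * t ^ 2))
        + ((2 * π * s) ^ (-(1:ℝ)/2) * (2 * a * c)) * (t * exp (-(2 * s)⁻¹ * t ^ 2))) :=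
    h1.add h2
  rw [integral_add h12 h3, integral_add h1 h2,
    integral_const_mul, integral_const_mul, integral_const_mul,
    my_integral_sq_mul_exp hb, my_integral_x_mul_exp hb, integral_gaussian,
    sqrt2pis hs]
  have hK := K_mul_sqrt hs
  have h2b : √(2 * π * s) / (2 * (2 * s)⁻¹) = √(2 * π * s) * s := by
    rw [show (2 * (2 * s)⁻¹) = s⁻¹ by field_simp]; field_simp
  rw [h2b]
  linear_combination (a ^ 2 * s + c ^ 2) * hK

lemma g1_integrable (hs : 0 < s) : Integrable (g1 s) := by
  have h := g1_key_integrable hs 0 1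
  simpa using h

lemma g1_integral (hs : 0 < s) : ∫ t : ℝ, g1 s t = 1 := by
  have h := g1_key_integral hs 0 1
  simpa using h

lemma norm_sq_eq {d : ℕ} (v : EuclideanSpace ℝ (Fin d)) : ‖v‖ ^ 2 = ∑ i, (v i) ^ 2 := by
  rw [EuclideanSpace.norm_eq, sq_sqrt (by positivity)]
  simp [sq_abs]

lemma gaussDensity_zero_prod {d : ℕ} (hs : 0 < s) (x : EuclideanSpace ℝ (Fin d)) :
    gaussDensity d 0 s x = ∏ i, g1 s (x i) := by
  have hx : ‖x - (0 : EuclideanSpace ℝ (Fin d))‖ ^ 2 = ∑ i, (x i) ^ 2 := by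
    rw [sub_zero]; exact norm_sq_eq x
  have hpos : (0:ℝ) < 2 * π * s := by positivity
  rw [gaussDensity, hx]
  simp only [g1]
  rw [Finset.prod_mul_distrib]
  congr 1
  · rw [Finset.prod_const, Finset.card_univ, Fintype.card_fin,
      ← rpow_natCast ((2 * π * s) ^ (-(1:ℝ)/2)) d, ← rpow_mul hpos.le]
    congr 1
    ring
  · rw [← Real.exp_sum]
    congr 1
    rw [neg_div, Finset.sum_div, ← Finset.sum_neg_distrib]
    refine Finset.sum_congr rfl fun i _ => ?_
    ring

lemma norm_av_sq {d : ℕ} (a : ℝ) (v x : EuclideanSpace ℝ (Fin d)) :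
    ‖a • x + v‖ ^ 2 = ∑ i, (a * x i + v i) ^ 2 := by
  rw [EuclideanSpace.norm_eq, sq_sqrt (by positivity)]
  refine Finset.sum_congr rfl fun i _ => ?_
  simp [Real.norm_eq_abs, sq_abs, PiLp.add_apply, PiLp.smul_apply, smul_eq_mul]

lemma euclid_moment {d : ℕ} (hs : 0 < s) (a : ℝ) (v : EuclideanSpace ℝ (Fin d)) :
    ∫ x : EuclideanSpace ℝ (Fin d), gaussDensity d 0 s x * ‖a • x + v‖ ^ 2
      = a ^ 2 * s * d + ‖v‖ ^ 2 := by
  classical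
  set f : Fin d → Fin d → ℝ → ℝ :=
    fun i j t => g1 s t * (if j = i then (a * t + v i) ^ 2 else 1) with hf_def
  have hfi : ∀ i j, Integrable (f i j) := by
    intro i j
    by_cases h : j = i
    · simpa [hf_def, h] using g1_key_integrable hs a (v i)
    · simpa [hf_def, h] using g1_integrable hs
  have hfint : ∀ i j, ∫ t, f i j t = if j = i then a ^ 2 * s + v i ^ 2 else 1 := by
    intro i j
    by_cases h : j = i
    · simpa [hf_def, h] using g1_key_integral hs a (v i)
    · simpa [hf_def, h] using g1_integral hs
  have e := (EuclideanSpace.volume_preserving_symm_measurableEquiv_toLp (Fin d)).symm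
  rw [← e.integral_comp (MeasurableEquiv.measurableEmbedding _)]
  have hpt : ∀ y : Fin d → ℝ,
      gaussDensity d 0 s ((MeasurableEquiv.toLp 2 (Fin d → ℝ)).symm.symm y)
        * ‖a • ((MeasurableEquiv.toLp 2 (Fin d → ℝ)).symm.symm y) + v‖ ^ 2
      = ∑ i, ∏ j, f i j (y j) := by
    intro y
    have hco : ∀ i, ((MeasurableEquiv.toLp 2 (Fin d → ℝ)).symm.symm y) i = y i := fun _ => rfl
    rw [gaussDensity_zero_prod hs, norm_av_sq, Finset.mul_sum]
    refine Finset.sum_congr rfl fun i _ => ?_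
    simp_rw [hf_def, hco]
    rw [Finset.prod_mul_distrib, Finset.prod_ite_eq']
    simp
  simp_rw [hpt]
  rw [integral_finset_sum (μ := volume) _ (fun i _ => (Integrable.fintype_prod (fun j => hfi i j) :
    Integrable (fun y : Fin d → ℝ => ∏ j, f i j (y j)) volume))]
  have hone : ∀ i, (∫ y : Fin d → ℝ, ∏ j, f i j (y j)) = a ^ 2 * s + v i ^ 2 := by
    intro i
    rw [integral_fintype_prod_volume_eq_prod]
    simp_rw [hfint i]
    simp
  simp_rw [hone]
  rw [Finset.sum_add_distrib, Finset.sum_const, Finset.card_univ, Fintype.card_fin,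
    norm_sq_eq v, nsmul_eq_mul]
  ring

end Density

end Aux

/-- For the Gaussian Proximal Sampler iterates `ρ_k = N(m_k, σ_k² I)` with
`m_k = m₀/(1+αη)^k` and `σ_k² = (σ₀²-1/α)/(1+αη)^{2k} + 1/α`, targeting
`ν = N(0, α⁻¹I)`, the relative Fisher information
`FI(ρ_k‖ν) = E_{ρ_k}[‖αx - (x-m_k)/σ_k²‖²]` equals
`α²‖m₀‖²/(1+αη)^{2k} + (d/σ_k²)(1-ασ₀²)²/(1+αη)^{4k}`; in particular if
`m₀ ≠ 0` then `FI(ρ_k‖ν) = O((1+αη)^{-2k})`. -/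
theorem proximalSampler_gaussian_relativeFisherInfo
    (d : ℕ) (α η σ0sq : ℝ) (hα : 0 < α) (hη : 0 < η) (hσ : 0 < σ0sq)
    (m0 : EuclideanSpace ℝ (Fin d))
    (m : ℕ → EuclideanSpace ℝ (Fin d)) (σsq : ℕ → ℝ)
    (hm : ∀ k : ℕ, m k = ((1 + α * η) ^ k)⁻¹ • m0)
    (hσk : ∀ k : ℕ, σsq k = (σ0sq - 1 / α) / (1 + α * η) ^ (2 * k) + 1 / α) :
    (∀ k : ℕ,
      ∫ x : EuclideanSpace ℝ (Fin d),
          gaussDensity d (m k) (σsq k) x * ‖α • x - (σsq k)⁻¹ • (x - m k)‖ ^ 2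
        = α ^ 2 * ‖m0‖ ^ 2 / (1 + α * η) ^ (2 * k)
          + ((d : ℝ) / σsq k) * (1 - α * σ0sq) ^ 2 / (1 + α * η) ^ (4 * k)) ∧
    (m0 ≠ 0 → ∃ C : ℝ, 0 ≤ C ∧ ∀ k : ℕ,
      (∫ x : EuclideanSpace ℝ (Fin d),
          gaussDensity d (m k) (σsq k) x * ‖α • x - (σsq k)⁻¹ • (x - m k)‖ ^ 2)
        ≤ C / (1 + α * η) ^ (2 * k)) := by
  have hP : (0:ℝ) < 1 + α * η := by nlinarith
  have hP1 : (1:ℝ) ≤ 1 + α * η := by nlinarith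
  have hmin : 0 < min σ0sq (1 / α) := lt_min hσ (by positivity)
  have hslb : ∀ k : ℕ, min σ0sq (1 / α) ≤ σsq k := by
    intro k
    rw [hσk k]
    have hQ0 : (0:ℝ) < (1 + α * η) ^ (2 * k) := pow_pos hP _
    have hQ1 : (1:ℝ) ≤ (1 + α * η) ^ (2 * k) := one_le_pow₀ hP1
    rcases le_or_gt (1 / α) σ0sq with h | h
    · have h0 : 0 ≤ (σ0sq - 1 / α) / (1 + α * η) ^ (2 * k) :=
        div_nonneg (by linarith) hQ0.le
      calc min σ0sq (1 / α) ≤ 1 / α := min_le_right _ _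
        _ ≤ _ := by linarith
    · have hx : σ0sq - 1 / α < 0 := by linarith
      have hge : σ0sq - 1 / α ≤ (σ0sq - 1 / α) / (1 + α * η) ^ (2 * k) := by
        rw [le_div_iff₀ hQ0]
        nlinarith
      calc min σ0sq (1 / α) ≤ σ0sq := min_le_left _ _
        _ ≤ _ := by linarith
  have hspos : ∀ k : ℕ, 0 < σsq k := fun k => lt_of_lt_of_le hmin (hslb k)
  have key : ∀ k : ℕ,
      ∫ x : EuclideanSpace ℝ (Fin d),
          gaussDensity d (m k) (σsq k) x * ‖α • x - (σsq k)⁻¹ • (x - m k)‖ ^ 2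
        = α ^ 2 * ‖m0‖ ^ 2 / (1 + α * η) ^ (2 * k)
          + ((d : ℝ) / σsq k) * (1 - α * σ0sq) ^ 2 / (1 + α * η) ^ (4 * k) := by
    intro k
    have hs : 0 < σsq k := hspos k
    have hsne : σsq k ≠ 0 := hs.ne'
    have hQ0 : (0:ℝ) < (1 + α * η) ^ (2 * k) := pow_pos hP _
    have hQne : ((1 + α * η) ^ (2 * k)) ≠ 0 := hQ0.ne'
    have hPk : (0:ℝ) < (1 + α * η) ^ k := pow_pos hP _
    have hpt : ∀ x : EuclideanSpace ℝ (Fin d),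
        gaussDensity d (m k) (σsq k) x * ‖α • x - (σsq k)⁻¹ • (x - m k)‖ ^ 2
        = (fun y => gaussDensity d 0 (σsq k) y
            * ‖(α - (σsq k)⁻¹) • y + α • (m k)‖ ^ 2) (x - m k) := by
      intro x
      have hv : α • x - (σsq k)⁻¹ • (x - m k)
          = (α - (σsq k)⁻¹) • (x - m k) + α • (m k) := by module
      simp only [gaussDensity, sub_zero, hv]
    simp_rw [hpt]
    rw [integral_sub_right_eq_self
      (fun y => gaussDensity d 0 (σsq k) y * ‖(α - (σsq k)⁻¹) • y + α • (m k)‖ ^ 2) (m k)]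
    rw [euclid_moment hs]
    have hk2 : ((1 + α * η) ^ k) ^ 2 = (1 + α * η) ^ (2 * k) := by
      rw [← pow_mul]
      congr 1
      ring
    have hnorm : ‖α • m k‖ ^ 2 = α ^ 2 * ‖m0‖ ^ 2 / (1 + α * η) ^ (2 * k) := by
      rw [hm k, smul_smul, norm_smul, mul_pow, Real.norm_eq_abs, sq_abs, mul_pow, inv_pow, hk2]
      field_simp
    rw [hnorm]
    have hαs : α * σsq k - 1 = (α * σ0sq - 1) / (1 + α * η) ^ (2 * k) := by
      rw [hσk k]
      field_simp
      ring
    have h4 : (1 + α * η) ^ (4 * k) = ((1 + α * η) ^ (2 * k)) ^ 2 := by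
      rw [← pow_mul, show 2 * k * 2 = 4 * k by ring]
    have h1 : α - (σsq k)⁻¹ = (α * σsq k - 1) / σsq k := by field_simp
    rw [h1, hαs, h4]
    field_simp
    ring
  refine ⟨key, fun _ => ⟨α ^ 2 * ‖m0‖ ^ 2 + d * (1 - α * σ0sq) ^ 2 / min σ0sq (1 / α),
    by positivity, fun k => ?_⟩⟩
  rw [key k]
  have hs : 0 < σsq k := hspos k
  have hQ0 : (0:ℝ) < (1 + α * η) ^ (2 * k) := pow_pos hP _
  have hQ1 : (1:ℝ) ≤ (1 + α * η) ^ (2 * k) := one_le_pow₀ hP1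
  have h4 : (1 + α * η) ^ (4 * k) = ((1 + α * η) ^ (2 * k)) ^ 2 := by
    rw [← pow_mul, show 2 * k * 2 = 4 * k by ring]
  rw [h4, add_div]
  refine add_le_add_right ?_ _
  have hL : ((d : ℝ) / σsq k) * (1 - α * σ0sq) ^ 2 / ((1 + α * η) ^ (2 * k)) ^ 2
      = (d : ℝ) * (1 - α * σ0sq) ^ 2 / (σsq k * ((1 + α * η) ^ (2 * k)) ^ 2) := by
    field_simp
  have hR : (d : ℝ) * (1 - α * σ0sq) ^ 2 / min σ0sq (1 / α) / (1 + α * η) ^ (2 * k)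
      = (d : ℝ) * (1 - α * σ0sq) ^ 2 / (min σ0sq (1 / α) * (1 + α * η) ^ (2 * k)) := by
    rw [div_div]
  rw [hL, hR]
  apply div_le_div_of_nonneg_left ?_ ?_ ?_
  · positivity
  · positivity
  · calc (σ0sq ⊓ (1 / α)) * (1 + α * η) ^ (2 * k)
        ≤ σsq k * (1 + α * η) ^ (2 * k) := mul_le_mul_of_nonneg_right (hslb k) hQ0.le
      _ ≤ σsq k * ((1 + α * η) ^ (2 * k)) ^ 2 := by nlinarith [mul_pos hs hQ0]
end
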